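/- arXiv:1810.04996 — 5 statements merged into one kernel-verified Lean document; each statement's English description precedes it below -/
import Mathlib

section
/- Fix α ∈ (0,1), δ ∈ (0,1), ε ∈ (0,1/2), and positive integers N_P ≤ N_A with N_P/N_A ≤ 1/2 − ε and N_P ≥ max( log(1/δ)/(2ε²), 8·log(1/α)/ε² ). Let X_1, …, X_{N_A} be independent standard Gaussians, and let μ̂_top = (1/N_P)·Σ_{i=1}^{N_P} X_{(i)} be the average of the N_P largest values. Then with probability at least 1 − δ one has Φ̄(μ̂_top·√N_P) ≤ α, i.e., the selection of the top N_P datasets yields a standard p-value at most α even though the true mean is 0. -/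
open MeasureTheory ProbabilityTheory

/-- The standard normal survival function `Φ̄(x) = ∫_x^∞ (1/√(2π)) exp(-t²/2) dt`. -/
noncomputable def Phibar (x : ℝ) : ℝ :=
  ∫ t in Set.Ioi x, (Real.sqrt (2 * Real.pi))⁻¹ * Real.exp (-t ^ 2 / 2)

/-- The `i`-th largest entry (0-indexed: `i = 0` is the largest) of the tuple `v`. -/
noncomputable def orderStatDesc {n : ℕ} (v : Fin n → ℝ) (i : Fin n) : ℝ :=
  v (Tuple.sort v i.rev)

/-- The average of the `NP` largest entries of a tuple of `NA` reals. -/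
noncomputable def topAvg (NA NP : ℕ) (v : Fin NA → ℝ) : ℝ :=
  (1 / (NP : ℝ)) * ∑ i ∈ Finset.univ.filter (fun i : Fin NA => (i : ℕ) < NP),
    orderStatDesc v i

/-! ### Auxiliary lemmas about `Phibar` -/

lemma phi_eq : (fun t : ℝ => (Real.sqrt (2 * Real.pi))⁻¹ * Real.exp (-t ^ 2 / 2))
    = fun t => (Real.sqrt (2 * Real.pi))⁻¹ * Real.exp (-(1/2) * t ^ 2) := by
  ext t; ring_nf

lemma phi_integrable : Integrable (fun t : ℝ => (Real.sqrt (2 * Real.pi))⁻¹ * Real.exp (-t ^ 2 / 2)) := by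
  rw [phi_eq]
  exact (integrable_exp_neg_mul_sq (by norm_num : (0:ℝ) < 1/2)).const_mul _

lemma phi_nonneg (t : ℝ) : 0 ≤ (Real.sqrt (2 * Real.pi))⁻¹ * Real.exp (-t ^ 2 / 2) := by
  positivity

lemma sqrt_two_pi_pos : 0 < Real.sqrt (2 * Real.pi) := by
  positivity

lemma Phibar_nonneg (x : ℝ) : 0 ≤ Phibar x :=
  setIntegral_nonneg measurableSet_Ioi fun t _ => phi_nonneg t

lemma Phibar_anti {a b : ℝ} (h : a ≤ b) : Phibar b ≤ Phibar a := by
  apply setIntegral_mono_set phi_integrable.integrableOn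
    (Filter.Eventually.of_forall fun t => phi_nonneg t)
  exact HasSubset.Subset.eventuallyLE (Set.Ioi_subset_Ioi h)

lemma Phibar_zero : Phibar 0 = 1/2 := by
  have h := integral_gaussian_Ioi (1/2 : ℝ)
  unfold Phibar
  rw [phi_eq, MeasureTheory.integral_const_mul, h]
  rw [show Real.pi / (1/2 : ℝ) = 2 * Real.pi by ring]
  field_simp

lemma Phibar_le_half {x : ℝ} (hx : 0 ≤ x) : Phibar x ≤ 1/2 :=
  Phibar_zero ▸ Phibar_anti hx

lemma Phibar_lb {t : ℝ} (ht : 0 ≤ t) :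
    1/2 - (Real.sqrt (2 * Real.pi))⁻¹ * t ≤ Phibar t := by
  have hsplit : Phibar 0 = (∫ u in Set.Ioc 0 t, (Real.sqrt (2 * Real.pi))⁻¹ * Real.exp (-u ^ 2 / 2))
      + Phibar t := by
    unfold Phibar
    rw [← setIntegral_union (Set.Ioc_disjoint_Ioi le_rfl) measurableSet_Ioi
      phi_integrable.integrableOn phi_integrable.integrableOn, Set.Ioc_union_Ioi_eq_Ioi ht]
  have hbound : (∫ u in Set.Ioc 0 t, (Real.sqrt (2 * Real.pi))⁻¹ * Real.exp (-u ^ 2 / 2))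
      ≤ (Real.sqrt (2 * Real.pi))⁻¹ * t := by
    have : (∫ u in Set.Ioc 0 t, (Real.sqrt (2 * Real.pi))⁻¹ * Real.exp (-u ^ 2 / 2))
        ≤ ∫ _ in Set.Ioc 0 t, (Real.sqrt (2 * Real.pi))⁻¹ := by
      apply setIntegral_mono_on phi_integrable.integrableOn
        (integrableOn_const (by simp [measure_Ioc_lt_top])) measurableSet_Ioc
      intro u _
      have h1 : Real.exp (-u ^ 2 / 2) ≤ 1 := by
        rw [Real.exp_le_one_iff]
        nlinarith [sq_nonneg u]
      nlinarith [inv_nonneg.2 sqrt_two_pi_pos.le, Real.exp_pos (-u^2/2)]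
    refine this.trans ?_
    rw [setIntegral_const, measureReal_def, Real.volume_Ioc, ENNReal.toReal_ofReal (by linarith), smul_eq_mul]
    nlinarith [inv_nonneg.2 sqrt_two_pi_pos.le]
  rw [Phibar_zero] at hsplit
  linarith

lemma Phibar_ub {x : ℝ} (hx : 0 ≤ x) : Phibar x ≤ Real.exp (-x ^ 2 / 2) := by
  have hemb : MeasurableEmbedding (fun u : ℝ => u + x) :=
    (Homeomorph.addRight x).measurableEmbedding
  have himg : Set.Ioi x = (fun u : ℝ => u + x) '' Set.Ioi 0 := by
    ext u
    simp only [Set.mem_image, Set.mem_Ioi]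
    constructor
    · intro h; exact ⟨u - x, by linarith, by ring⟩
    · rintro ⟨v, hv, rfl⟩; linarith
  have hmap : Phibar x = ∫ u in Set.Ioi (0:ℝ),
      (Real.sqrt (2 * Real.pi))⁻¹ * Real.exp (-(u + x) ^ 2 / 2) := by
    unfold Phibar
    rw [himg, MeasurePreserving.setIntegral_image_emb (measurePreserving_add_right volume x) hemb]
  have hintble : IntegrableOn (fun u : ℝ => (Real.sqrt (2 * Real.pi))⁻¹ * Real.exp (-(u + x) ^ 2 / 2)) (Set.Ioi 0) := by
    have := (phi_integrable.comp_add_right x).integrableOn (s := Set.Ioi (0:ℝ))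
    exact this
  have hpt : ∀ u ∈ Set.Ioi (0:ℝ), (Real.sqrt (2 * Real.pi))⁻¹ * Real.exp (-(u + x) ^ 2 / 2)
      ≤ Real.exp (-x ^ 2 / 2) * ((Real.sqrt (2 * Real.pi))⁻¹ * Real.exp (-u ^ 2 / 2)) := by
    intro u hu
    rw [Set.mem_Ioi] at hu
    have h1 : Real.exp (-(u + x) ^ 2 / 2) ≤ Real.exp (-x ^ 2 / 2) * Real.exp (-u ^ 2 / 2) := by
      rw [← Real.exp_add, Real.exp_le_exp]
      nlinarith
    have h2 : (0:ℝ) ≤ (Real.sqrt (2 * Real.pi))⁻¹ := inv_nonneg.2 sqrt_two_pi_pos.le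
    nlinarith [Real.exp_pos (-(u+x)^2/2)]
  calc Phibar x = ∫ u in Set.Ioi (0:ℝ), (Real.sqrt (2 * Real.pi))⁻¹ * Real.exp (-(u + x) ^ 2 / 2) := hmap
    _ ≤ ∫ u in Set.Ioi (0:ℝ), Real.exp (-x ^ 2 / 2) * ((Real.sqrt (2 * Real.pi))⁻¹ * Real.exp (-u ^ 2 / 2)) := by
        apply setIntegral_mono_on hintble ((phi_integrable.const_mul _).integrableOn) measurableSet_Ioi hpt
    _ = Real.exp (-x ^ 2 / 2) * Phibar 0 := by
        rw [MeasureTheory.integral_const_mul]; rfl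
    _ ≤ Real.exp (-x ^ 2 / 2) := by
        rw [Phibar_zero]
        nlinarith [Real.exp_pos (-x^2/2)]

/-! ### Auxiliary lemmas about order statistics -/

lemma orderStat_gt {n : ℕ} (v : Fin n → ℝ) (t : ℝ) (NP : ℕ)
    (hcard : NP ≤ (Finset.univ.filter (fun i : Fin n => t < v i)).card)
    (i : Fin n) (hi : (i : ℕ) < NP) : t < orderStatDesc v i := by
  by_contra hcon
  push_neg at hcon
  set σ := Tuple.sort v with hσ
  have hmono : Monotone (v ∘ σ) := Tuple.monotone_sort v
  have hcards : (Finset.univ.filter (fun j : Fin n => t < v (σ j))).card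
      = (Finset.univ.filter (fun i : Fin n => t < v i)).card := by
    apply Finset.card_bij (fun j _ => σ j)
    · intro j hj; simp only [Finset.mem_filter, Finset.mem_univ, true_and] at hj ⊢; exact hj
    · intro a _ b _ hab; exact σ.injective hab
    · intro b hb
      refine ⟨σ.symm b, ?_, by simp⟩
      simp only [Finset.mem_filter, Finset.mem_univ, true_and] at hb ⊢
      simpa using hb
  have hsub : (Finset.univ.filter (fun j : Fin n => t < v (σ j))) ⊆ Finset.Ioi i.rev := by
    intro j hj
    simp only [Finset.mem_filter, Finset.mem_univ, true_and] at hj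
    rw [Finset.mem_Ioi]
    by_contra hle
    push_neg at hle
    have := hmono hle
    simp only [Function.comp] at this
    unfold orderStatDesc at hcon
    exact absurd hj (not_lt.2 (this.trans hcon))
  have hcard2 := Finset.card_le_card hsub
  rw [Fin.card_Ioi, hcards] at hcard2
  have hrev : (i.rev : ℕ) = n - 1 - (i : ℕ) := Fin.val_rev i ▸ by omega
  omega

lemma filter_lt_card {n NP : ℕ} (hle : NP ≤ n) :
    (Finset.univ.filter (fun i : Fin n => (i : ℕ) < NP)).card = NP := by
  have : (Finset.univ.filter (fun i : Fin n => (i : ℕ) < NP))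
      = (Finset.univ : Finset (Fin NP)).map ⟨Fin.castLE hle, Fin.castLE_injective hle⟩ := by
    ext j
    simp only [Finset.mem_filter, Finset.mem_univ, true_and, Finset.mem_map,
      Function.Embedding.coeFn_mk]
    constructor
    · intro hj; exact ⟨⟨j, hj⟩, by ext; simp⟩
    · rintro ⟨i, _, rfl⟩; simp
  rw [this, Finset.card_map, Finset.card_univ, Fintype.card_fin]

lemma topAvg_ge {n : ℕ} (v : Fin n → ℝ) (t : ℝ) (NP : ℕ) (hNP : 1 ≤ NP) (hle : NP ≤ n)
    (hcard : NP ≤ (Finset.univ.filter (fun i : Fin n => t < v i)).card) :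
    t ≤ topAvg n NP v := by
  have hsum : (NP : ℝ) * t ≤ ∑ i ∈ Finset.univ.filter (fun i : Fin n => (i : ℕ) < NP),
      orderStatDesc v i := by
    have h := Finset.card_nsmul_le_sum (Finset.univ.filter (fun i : Fin n => (i : ℕ) < NP))
      (orderStatDesc v) t (fun i hi => by
        simp only [Finset.mem_filter, Finset.mem_univ, true_and] at hi
        exact (orderStat_gt v t NP hcard i hi).le)
    rwa [filter_lt_card hle, nsmul_eq_mul] at h
  have hNPpos : (0:ℝ) < NP := by exact_mod_cast hNP
  unfold topAvg
  calc t = (1 / (NP:ℝ)) * ((NP:ℝ) * t) := by field_simp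
    _ ≤ _ := by
      apply mul_le_mul_of_nonneg_left hsum
      positivity

/-! ### Elementary analytic inequalities -/

lemma log_one_sub_le {u : ℝ} (h0 : 0 ≤ u) (h1 : u < 1) :
    Real.log (1 - u) ≤ -u - u ^ 2 / 2 := by
  rcases eq_or_lt_of_le h0 with rfl | hu
  · simp
  set f : ℝ → ℝ := fun x => -x - x ^ 2 / 2 - Real.log (1 - x) with hf
  have key : f 0 ≤ f u := by
    have hd : ∀ x ∈ Set.Ioo (0:ℝ) u, HasDerivAt f (-1 - x + 1 / (1 - x)) x := by
      intro x hx
      have hne : (1:ℝ) - x ≠ 0 := by have := hx.2; intro h; nlinarith [hx.1]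
      have hlog : HasDerivAt (fun y : ℝ => Real.log (1 - y)) ((1 - x)⁻¹ * (-1)) x := by
        have h1 : HasDerivAt (fun y : ℝ => 1 - y) (-1 : ℝ) x := by
          simpa using (hasDerivAt_id x).const_sub 1
        exact (Real.hasDerivAt_log hne).comp x h1
      have hpoly : HasDerivAt (fun y : ℝ => -y - y ^ 2 / 2) (-1 - x) x := by
        have h1 : HasDerivAt (fun y : ℝ => -y) (-1 : ℝ) x := (hasDerivAt_id x).neg
        have h2 : HasDerivAt (fun y : ℝ => y ^ 2 / 2) x x := by
          simpa using (hasDerivAt_pow 2 x).div_const 2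
        exact h1.sub h2
      have := hpoly.sub hlog
      rw [show -1 - x + 1 / (1 - x) = -1 - x - (1 - x)⁻¹ * -1 by ring]
      exact this
    have hcont : ContinuousOn f (Set.Icc 0 u) := by
      apply ContinuousOn.sub
      · fun_prop
      · apply ContinuousOn.log (by fun_prop)
        intro x hx
        intro h; simp only [Set.mem_Icc] at hx; nlinarith [hx.2]
    have := StrictMonoOn.monotoneOn <| strictMonoOn_of_hasDerivWithinAt_pos (convex_Icc 0 u) hcont
      (fun x hx => ((hd x (by simpa [interior_Icc] using hx)).hasDerivWithinAt))
      (fun x hx => by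
        rw [interior_Icc] at hx
        have h1 : 0 < 1 - x := by have := hx.2; linarith
        have : -1 - x + 1 / (1 - x) = x ^ 2 / (1 - x) := by field_simp; ring
        rw [this]; exact div_pos (pow_pos hx.1 2) h1)
    exact this (Set.left_mem_Icc.2 hu.le) (Set.right_mem_Icc.2 hu.le) hu.le
  have hf0 : f 0 = 0 := by simp [hf]
  rw [hf0] at key
  simp only [hf] at key
  linarith

lemma one_sub_le_exp {u : ℝ} (h0 : 0 ≤ u) (h1 : u < 1) :
    1 - u ≤ Real.exp (-u - u ^ 2 / 2) := by
  have := log_one_sub_le h0 h1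
  have hpos : (0:ℝ) < 1 - u := by linarith
  calc 1 - u = Real.exp (Real.log (1 - u)) := (Real.exp_log hpos).symm
    _ ≤ _ := Real.exp_le_exp.2 this

lemma exp_neg_le_quad {x : ℝ} (hx : 0 ≤ x) : Real.exp (-x) ≤ 1 - x + x ^ 2 / 2 := by
  have h := Real.quadratic_le_exp_of_nonneg hx
  have hexp : 0 < Real.exp x := Real.exp_pos x
  have hq : 0 < 1 - x + x ^ 2 / 2 := by nlinarith
  have key : 1 ≤ (1 - x + x ^ 2 / 2) * Real.exp x := by nlinarith
  rw [Real.exp_neg, ← one_div, div_le_iff₀ hexp]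
  linarith

lemma polycore {ε p : ℝ} (hε : 0 < ε) (hε2 : ε < 1/2) (hp1 : 1/2 - ε/4 ≤ p) (hp2 : p ≤ 1/2) :
    2*ε*(1+ε)*(1/2-ε) ≤ p*(2*ε-2*ε^2) + (p*(2*ε-2*ε^2))^2/2 := by
  nlinarith [sq_nonneg (p - (1/2 - ε/4)), mul_pos hε (sub_pos.2 hε2),
    sq_nonneg ε, sq_nonneg (1 - ε), sq_nonneg (2*ε - 2*ε^2),
    mul_nonneg (mul_nonneg hε.le hε.le) hε.le,
    mul_nonneg (sub_nonneg.2 hp1) hε.le,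
    mul_nonneg (mul_nonneg (sub_nonneg.2 hp1) hε.le) hε.le,
    sq_nonneg (ε * (1 - ε)), sq_nonneg (ε^2)]

set_option maxHeartbeats 1000000 in
lemma core_num {δ ε p : ℝ} {NP NA : ℕ} (hδ : δ ∈ Set.Ioo (0 : ℝ) 1)
    (hε : ε ∈ Set.Ioo (0 : ℝ) (1 / 2))
    (hNP : 1 ≤ NP) (hle : NP ≤ NA)
    (hratio : (NP : ℝ) / NA ≤ 1 / 2 - ε)
    (hsizeδ : Real.log (1 / δ) / (2 * ε ^ 2) ≤ (NP : ℝ))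
    (hp1 : 1/2 - ε/4 ≤ p) (hp2 : p ≤ 1/2) :
    Real.exp (2 * ε * NP) * ((1 - p) + p * Real.exp (-(2 * ε))) ^ NA ≤ δ := by
  obtain ⟨hε0, hε2⟩ := hε
  obtain ⟨hδ0, hδ1⟩ := hδ
  have hNA0 : (0:ℝ) < NA := by
    have : (1:ℕ) ≤ NA := hNP.trans hle
    exact_mod_cast this
  set u : ℝ := p * (1 - Real.exp (-(2 * ε))) with hu
  have hp0 : 0 < p := by linarith
  have hexp1 : Real.exp (-(2 * ε)) ≤ 1 := by
    rw [Real.exp_le_one_iff]; linarith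
  have hexp0 : 0 < Real.exp (-(2 * ε)) := Real.exp_pos _
  have hu0 : 0 ≤ u := by
    apply mul_nonneg hp0.le; linarith
  have hu1 : u < 1 := by
    have : u ≤ p := by
      rw [hu]
      nlinarith
    linarith
  have heq : (1 - p) + p * Real.exp (-(2 * ε)) = 1 - u := by rw [hu]; ring
  have hquad : Real.exp (-(2*ε)) ≤ 1 - 2*ε + (2*ε)^2/2 := exp_neg_le_quad (by linarith)
  have hulb : p * (2*ε - 2*ε^2) ≤ u := by
    rw [hu]
    have : 2*ε - 2*ε^2 ≤ 1 - Real.exp (-(2*ε)) := by nlinarith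
    nlinarith
  have hq : (NP : ℝ) ≤ (1/2 - ε) * NA := by
    rw [div_le_iff₀ hNA0] at hratio; linarith
  have hkey : 2 * ε * (NP:ℝ) + (NA:ℝ) * (-u - u^2/2) ≤ -(2 * ε^2 * NP) := by
    have hpoly := polycore hε0 hε2 hp1 hp2
    have hv0 : 0 ≤ p*(2*ε-2*ε^2) := by nlinarith
    have hsq : (p*(2*ε-2*ε^2))^2 ≤ u^2 := by
      apply pow_le_pow_left₀ hv0 hulb
    have hmono : p*(2*ε-2*ε^2) + (p*(2*ε-2*ε^2))^2/2 ≤ u + u^2/2 := by linarith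
    have hperunit : 2*ε*(1+ε)*(1/2-ε) ≤ u + u^2/2 := le_trans hpoly hmono
    have h1 : 2*ε*(1+ε)*(NP:ℝ) ≤ 2*ε*(1+ε)*((1/2-ε)*NA) := by
      apply mul_le_mul_of_nonneg_left hq
      nlinarith
    have h2 : 2*ε*(1+ε)*((1/2-ε)*NA) ≤ (NA:ℝ) * (u + u^2/2) := by
      rw [show 2*ε*(1+ε)*((1/2-ε)*NA) = (NA:ℝ) * (2*ε*(1+ε)*(1/2-ε)) by ring]
      exact mul_le_mul_of_nonneg_left hperunit hNA0.le
    nlinarith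
  have hlogδ : -(2 * ε^2 * NP) ≤ Real.log δ := by
    have h1 : Real.log (1/δ) ≤ 2 * ε^2 * NP := by
      rw [div_le_iff₀ (by positivity)] at hsizeδ
      linarith
    rw [one_div, Real.log_inv] at h1
    linarith
  calc Real.exp (2 * ε * NP) * ((1 - p) + p * Real.exp (-(2 * ε))) ^ NA
      = Real.exp (2 * ε * NP) * (1 - u) ^ NA := by rw [heq]
    _ ≤ Real.exp (2 * ε * NP) * (Real.exp (-u - u^2/2)) ^ NA := by
        apply mul_le_mul_of_nonneg_left _ (Real.exp_pos _).le
        exact pow_le_pow_left₀ (by linarith) (one_sub_le_exp hu0 hu1) NA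
    _ = Real.exp (2 * ε * NP + NA * (-u - u^2/2)) := by
        rw [← Real.exp_nat_mul, ← Real.exp_add]
    _ ≤ Real.exp (Real.log δ) := by
        apply Real.exp_le_exp.2
        linarith
    _ = δ := Real.exp_log hδ0

/-- Cherry-picking the top `N_P` of `N_A` i.i.d. standard Gaussian results yields a
standard `p`-value at most `α` with probability at least `1 - δ`. -/
theorem stmt1 {Ω : Type*} [MeasureSpace Ω] [IsProbabilityMeasure (ℙ : Measure Ω)]
    (α δ ε : ℝ) (hα : α ∈ Set.Ioo (0 : ℝ) 1) (hδ : δ ∈ Set.Ioo (0 : ℝ) 1)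
    (hε : ε ∈ Set.Ioo (0 : ℝ) (1 / 2))
    (NP NA : ℕ) (hNP : 1 ≤ NP) (hle : NP ≤ NA)
    (hratio : (NP : ℝ) / NA ≤ 1 / 2 - ε)
    (hsize : (NP : ℝ) ≥ max (Real.log (1 / δ) / (2 * ε ^ 2)) (8 * Real.log (1 / α) / ε ^ 2))
    (X : Fin NA → Ω → ℝ) (hmeas : ∀ i, Measurable (X i))
    (hindep : iIndepFun X ℙ)
    (hdist : ∀ i, Measure.map (X i) ℙ = gaussianReal 0 1) :
    ENNReal.ofReal (1 - δ) ≤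
      ℙ {ω | Phibar (topAvg NA NP (fun i => X i ω) * Real.sqrt NP) ≤ α} := by
  obtain ⟨hα0, hα1⟩ := hα
  have hε0 := hε.1
  have hε2 := hε.2
  set t : ℝ := ε / 2 with htdef
  have ht0 : 0 ≤ t := by rw [htdef]; linarith
  set g : ℝ → ℝ := fun x => if t < x then (1:ℝ) else 0 with hgdef
  have hgmeas : Measurable g := Measurable.ite measurableSet_Ioi measurable_const measurable_const
  set Y : Fin NA → Ω → ℝ := fun i => g ∘ X i with hYdef
  have hYmeas : ∀ i, Measurable (Y i) := fun i => hgmeas.comp (hmeas i)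
  have hYindep : iIndepFun Y ℙ :=
    hindep.comp (fun _ => g) (fun _ => hgmeas)
  set p : ℝ := Phibar t with hpdef
  have hp2 : p ≤ 1/2 := Phibar_le_half ht0
  have hp1 : 1/2 - ε/4 ≤ p := by
    have hc : (Real.sqrt (2 * Real.pi))⁻¹ ≤ 1/2 := by
      have h4 : (2:ℝ) ≤ Real.sqrt (2 * Real.pi) := by
        have hpi : (4:ℝ) ≤ 2 * Real.pi := by nlinarith [Real.pi_gt_three]
        nlinarith [Real.sq_sqrt (by linarith : (0:ℝ) ≤ 2 * Real.pi),
          Real.sqrt_nonneg (2 * Real.pi)]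
      calc (Real.sqrt (2 * Real.pi))⁻¹ ≤ 2⁻¹ := by
            apply inv_anti₀ (by norm_num) h4
        _ = 1/2 := by norm_num
    have hlb := Phibar_lb ht0
    have : (Real.sqrt (2 * Real.pi))⁻¹ * t ≤ (1/2) * t :=
      mul_le_mul_of_nonneg_right hc ht0
    rw [htdef] at *
    linarith
  -- probability of exceeding the threshold
  have hp_prob : ∀ i : Fin NA, ℙ (X i ⁻¹' Set.Ioi t) = ENNReal.ofReal p := by
    intro i
    rw [← Measure.map_apply (hmeas i) measurableSet_Ioi, hdist i,
      gaussianReal_apply_eq_integral 0 one_ne_zero]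
    congr 1
    rw [hpdef]
    unfold Phibar
    apply setIntegral_congr_fun measurableSet_Ioi
    intro x _
    simp only [gaussianPDFReal, NNReal.coe_one, mul_one, sub_zero]
  have hp_toReal : ∀ i : Fin NA, (ℙ (X i ⁻¹' Set.Ioi t)).toReal = p := by
    intro i
    rw [hp_prob i, ENNReal.toReal_ofReal (Phibar_nonneg t)]
  -- moment generating function of each indicator
  have hmgf : ∀ i : Fin NA, mgf (Y i) ℙ (-(2 * ε)) = (1 - p) + p * Real.exp (-(2 * ε)) := by
    intro i
    have hs : MeasurableSet (X i ⁻¹' Set.Ioi t) := (hmeas i) measurableSet_Ioi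
    have hrw : (fun ω => Real.exp (-(2 * ε) * Y i ω))
        = fun ω => (X i ⁻¹' Set.Ioi t).indicator (fun _ => Real.exp (-(2 * ε)) - 1) ω + 1 := by
      ext ω
      by_cases h : t < X i ω
      · simp [hYdef, hgdef, h, Set.indicator_apply, Set.mem_preimage, Set.mem_Ioi]
      · simp [hYdef, hgdef, h, Set.indicator_apply, Set.mem_preimage, Set.mem_Ioi]
    unfold mgf
    rw [hrw, integral_add ((integrable_const _).indicator hs) (integrable_const 1),
      integral_indicator_const _ hs, integral_const]
    simp only [measureReal_def, measure_univ, ENNReal.toReal_one, smul_eq_mul, one_smul]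
    rw [hp_toReal i]
    ring
  -- the count function
  set K : Ω → ℝ := fun ω => ∑ i, Y i ω with hKdef
  have hKmeas : Measurable K := by
    apply Finset.measurable_sum
    intro i _
    exact hYmeas i
  have hK0 : ∀ ω, 0 ≤ K ω := by
    intro ω
    apply Finset.sum_nonneg
    intro i _
    simp only [hYdef, hgdef, Function.comp]
    split_ifs <;> norm_num
  have h_int : Integrable (fun ω => Real.exp (-(2 * ε) * K ω)) ℙ := by
    apply Integrable.mono' (integrable_const (1:ℝ))
    · exact ((hKmeas.const_mul _).exp).aestronglyMeasurable
    · filter_upwards with ω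
      rw [Real.norm_eq_abs, Real.abs_exp, Real.exp_le_one_iff]
      have := hK0 ω
      nlinarith
  -- Chernoff bound
  have hKsum : K = ∑ i, Y i := by
    funext ω
    rw [hKdef]
    simp [Finset.sum_apply]
  have hmgfK : mgf K ℙ (-(2 * ε)) = ((1 - p) + p * Real.exp (-(2 * ε))) ^ NA := by
    rw [hKsum, hYindep.mgf_sum hYmeas Finset.univ]
    simp_rw [hmgf]
    rw [Finset.prod_const, Finset.card_univ, Fintype.card_fin]
  have hchern := measure_le_le_exp_mul_mgf (X := K) (μ := ℙ) ((NP : ℝ))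
    (by linarith : -(2 * ε) ≤ 0) h_int
  have hchern2 : (ℙ {ω | K ω ≤ (NP : ℝ)}).toReal ≤ δ := by
    refine hchern.trans ?_
    rw [hmgfK, neg_neg]
    exact core_num hδ hε hNP hle hratio (le_trans (le_max_left _ _) hsize) hp1 hp2
  set B : Set Ω := {ω | K ω ≤ (NP : ℝ)} with hBdef
  have hBmeas : MeasurableSet B := measurableSet_le hKmeas measurable_const
  have hPB : ℙ B ≤ ENNReal.ofReal δ := by
    rw [← ENNReal.ofReal_toReal (measure_ne_top ℙ B)]
    exact ENNReal.ofReal_le_ofReal hchern2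
  -- inclusion of the good event
  have hincl : Bᶜ ⊆ {ω | Phibar (topAvg NA NP (fun i => X i ω) * Real.sqrt NP) ≤ α} := by
    intro ω hω
    simp only [hBdef, Set.mem_compl_iff, Set.mem_setOf_eq, not_le] at hω
    have hcard : NP ≤ (Finset.univ.filter (fun i : Fin NA => t < X i ω)).card := by
      have hKcard : K ω = ((Finset.univ.filter (fun i : Fin NA => t < X i ω)).card : ℝ) := by
        rw [hKdef]
        simp only [hYdef, hgdef, Function.comp]
        rw [Finset.sum_boole]
      rw [hKcard] at hω
      exact_mod_cast hω.le
    have htop : t ≤ topAvg NA NP (fun i => X i ω) := topAvg_ge _ t NP hNP hle hcard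
    have hsqrt0 : (0:ℝ) ≤ Real.sqrt NP := Real.sqrt_nonneg _
    have h1 : Phibar (topAvg NA NP (fun i => X i ω) * Real.sqrt NP) ≤ Phibar (t * Real.sqrt NP) :=
      Phibar_anti (mul_le_mul_of_nonneg_right htop hsqrt0)
    have ht0' : 0 ≤ t * Real.sqrt NP := mul_nonneg ht0 hsqrt0
    have h2 : Phibar (t * Real.sqrt NP) ≤ Real.exp (-(t * Real.sqrt NP) ^ 2 / 2) := Phibar_ub ht0'
    have h3 : (t * Real.sqrt NP) ^ 2 = t ^ 2 * NP := by
      rw [mul_pow, Real.sq_sqrt (Nat.cast_nonneg NP)]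
    have h4 : Real.exp (-(t * Real.sqrt NP) ^ 2 / 2) ≤ α := by
      rw [h3]
      have hsizeα : 8 * Real.log (1/α) / ε^2 ≤ (NP : ℝ) := le_trans (le_max_right _ _) hsize
      rw [div_le_iff₀ (by positivity)] at hsizeα
      rw [one_div, Real.log_inv] at hsizeα
      calc Real.exp (-(t ^ 2 * NP) / 2) ≤ Real.exp (Real.log α) := by
            apply Real.exp_le_exp.2
            rw [htdef]
            nlinarith
        _ = α := Real.exp_log hα0
    exact Set.mem_setOf_eq ▸ le_trans h1 (le_trans h2 h4)
  -- conclude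
  calc ENNReal.ofReal (1 - δ) ≤ 1 - ENNReal.ofReal δ := by
        apply ENNReal.le_sub_of_add_le_right ENNReal.ofReal_ne_top
        rw [← ENNReal.ofReal_add (by linarith [hδ.2]) (le_of_lt hδ.1)]
        rw [show (1 - δ) + δ = 1 by ring]
        simp
    _ ≤ 1 - ℙ B := tsub_le_tsub le_rfl hPB
    _ = ℙ Bᶜ := (prob_compl_eq_one_sub hBmeas).symm
    _ ≤ ℙ {ω | Phibar (topAvg NA NP (fun i => X i ω) * Real.sqrt NP) ≤ α} := measure_mono hincl
end

section
/- Fix δ ∈ (0,1) and integers 1 ≤ N_P < N_A. Let X_1, …, X_{N_A} be independent standard Gaussians and let X_{(1)} ≥ … ≥ X_{(N_A)} be their decreasing order statistics. Then with probability at least 1 − δ, the average of the N_P largest values satisfies (1/N_P)·Σ_{i=1}^{N_P} X_{(i)} ≤ 3·√(2·log(1/δ)) + 7·√(2·log(e·N_A/N_P)) + π/(2·N_P). -/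
open MeasureTheory ProbabilityTheory

open Finset Real
open scoped ENNReal NNReal Nat

/-!
Peel off the order statistics one at a time. For the `k`-th largest value take the
threshold `t_k = √(2 log(1/δ)) + √(2 log(e N_A/N_P)) + √(2 log(2 N_P/k))`. By independence
and the Chernoff bound `P(X ≥ t) ≤ exp(-t²/2)`, at least `k` of the `X_i` reach `t_k` with
probability at most `C(N_A, k) exp(-k t_k²/2) ≤ (e N_A/k)^k exp(-k t_k²/2) ≤ (δ/2)^k`, and
these probabilities sum to at most `δ`. Off this event `X_(k) < t_k` for all `k ≤ N_P`, and since
`∑_k log(N_P/k) = log(N_P^N_P / N_P!) ≤ N_P`, the average of the `t_k` is at most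
`√(2 log(1/δ)) + √(2 log(e N_A/N_P)) + 3`.
-/

lemma gaussianReal_Ici_le (μ : ℝ) (v : ℝ≥0) {t : ℝ} (ht : μ ≤ t) :
    gaussianReal μ v (Set.Ici t) ≤ ENNReal.ofReal (exp (-(t - μ) ^ 2 / (2 * v))) := by
  have chernoff := measure_ge_le_exp_mul_mgf (μ := gaussianReal μ v) (X := id) t
    (t := (t - μ) / v) (div_nonneg (sub_nonneg.2 ht) v.2) (integrable_exp_mul_gaussianReal _)
  rw [mgf_id_gaussianReal, ← exp_add] at chernoff
  rw [← ofReal_measureReal]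
  refine ENNReal.ofReal_le_ofReal (chernoff.trans_eq (congrArg exp ?_))
  rcases eq_or_ne (v : ℝ) 0 with hv | hv
  · simp [hv]
  · field_simp
    ring

lemma ProbabilityTheory.iIndepFun.measure_le_card_filter_mem_le {ι Ω β : Type*}
    [Fintype ι] [MeasurableSpace Ω] [MeasurableSpace β] {μ : Measure Ω} {X : ι → Ω → β}
    (hX : iIndepFun X μ)
    {s : Set β} [DecidablePred (· ∈ s)] (hs : MeasurableSet s) {q : ℝ≥0∞}
    (hq : ∀ i, μ (X i ⁻¹' s) ≤ q) (k : ℕ) :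
    μ {ω | k ≤ #{i | X i ω ∈ s}} ≤ (Fintype.card ι).choose k * q ^ k := by
  have hcover :
      {ω | k ≤ #{i | X i ω ∈ s}} ⊆ ⋃ S ∈ powersetCard k univ, ⋂ i ∈ S, X i ⁻¹' s := by
    intro ω hω
    obtain ⟨S, hS, rfl⟩ := exists_subset_card_eq hω
    exact Set.mem_biUnion (mem_powersetCard.2 ⟨subset_univ S, rfl⟩)
      (Set.mem_biInter fun i hi => (mem_filter.1 (hS hi)).2)
  calc μ {ω | k ≤ #{i | X i ω ∈ s}}
      ≤ ∑ S ∈ powersetCard k univ, μ (⋂ i ∈ S, X i ⁻¹' s) :=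
        (measure_mono hcover).trans (measure_biUnion_finset_le _ _)
    _ = ∑ S ∈ powersetCard k (univ : Finset ι), ∏ i ∈ S, μ (X i ⁻¹' s) :=
        sum_congr rfl fun S _ => hX.meas_biInter fun i _ => ⟨s, hs, rfl⟩
    _ ≤ ∑ S ∈ powersetCard k (univ : Finset ι), q ^ k :=
        sum_le_sum fun S hS => (mem_powersetCard.1 hS).2 ▸ prod_le_pow_card _ _ _ fun i _ => hq i
    _ = (Fintype.card ι).choose k * q ^ k := by
        rw [sum_const, card_powersetCard, card_univ, nsmul_eq_mul]

lemma ofReal_one_sub_le_measure_of_compl_subset {Ω : Type*} [MeasurableSpace Ω]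
    {μ : Measure Ω} [IsProbabilityMeasure μ] {A B : Set Ω} {δ : ℝ} (hδ : 0 ≤ δ)
    (hB : μ B ≤ ENNReal.ofReal δ) (hBA : Bᶜ ⊆ A) : ENNReal.ofReal (1 - δ) ≤ μ A := by
  rw [ENNReal.ofReal_sub _ hδ, ENNReal.ofReal_one, tsub_le_iff_right]
  calc (1 : ℝ≥0∞) = μ Set.univ := measure_univ.symm
    _ ≤ μ B + μ Bᶜ := measure_univ_le_add_compl B
    _ ≤ μ A + ENNReal.ofReal δ := by rw [add_comm]; exact add_le_add (measure_mono hBA) hB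

lemma Nat.choose_le_exp_mul_div_pow (n k : ℕ) : (n.choose k : ℝ) ≤ (exp 1 * n / k) ^ k := by
  rcases k.eq_zero_or_pos with rfl | hk
  · simp
  have hfact : (k : ℝ) ^ k / k ! ≤ exp 1 ^ k := by
    simpa [← exp_nat_mul] using Real.pow_div_factorial_le_exp _ (Nat.cast_nonneg k) k
  calc (n.choose k : ℝ) ≤ n ^ k / k ! := Nat.choose_le_pow_div k n
    _ = (n / k) ^ k * (k ^ k / k !) := by
        rw [← mul_div_assoc, ← mul_pow, div_mul_cancel₀ _ (by positivity)]
    _ ≤ (n / k) ^ k * exp 1 ^ k := by gcongr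
    _ = (exp 1 * n / k) ^ k := by rw [← mul_pow]; ring

lemma choose_mul_exp_neg_sq_pow_le {n k : ℕ} (hn : 0 < n) (hk : 0 < k) {ε t : ℝ} (hε : 0 < ε)
    (ht : 2 * log (exp 1 * n / (k * ε)) ≤ t ^ 2) :
    (n.choose k : ℝ) * exp (-t ^ 2 / 2) ^ k ≤ ε ^ k := by
  have hpos : 0 < exp 1 * n / (k * ε) := by positivity
  have htail : exp (-t ^ 2 / 2) ≤ (exp 1 * n / (k * ε))⁻¹ := by
    rw [← exp_log hpos, ← exp_neg]
    exact exp_le_exp.2 (by linarith)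
  calc (n.choose k : ℝ) * exp (-t ^ 2 / 2) ^ k
      ≤ (exp 1 * n / k) ^ k * (exp 1 * n / (k * ε))⁻¹ ^ k := by
        gcongr
        exact Nat.choose_le_exp_mul_div_pow n k
    _ = ε ^ k := by
        rw [← mul_pow]
        congr 1
        field_simp

lemma measure_le_card_filter_le_le_pow_of_gaussian {Ω : Type*} [MeasureSpace Ω] {n : ℕ}
    {X : Fin n → Ω → ℝ}
    (hindep : iIndepFun X ℙ) (hdist : ∀ i, Measure.map (X i) ℙ = gaussianReal 0 1)
    {k : ℕ} (hk : 0 < k) {ε t : ℝ} (hε : 0 < ε) (ht0 : 0 ≤ t)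
    (ht : 2 * log (exp 1 * n / (k * ε)) ≤ t ^ 2) :
    ℙ {ω | k ≤ #{i | t ≤ X i ω}} ≤ ENNReal.ofReal (ε ^ k) := by
  rcases n.eq_zero_or_pos with rfl | hn
  · simp [Nat.one_le_iff_ne_zero.1 hk]
  have htail : ∀ i, ℙ (X i ⁻¹' Set.Ici t) ≤ ENNReal.ofReal (exp (-t ^ 2 / 2)) := by
    intro i
    have hmeas : AEMeasurable (X i) :=
      .of_map_ne_zero (by simp [hdist i, IsProbabilityMeasure.ne_zero])
    rw [← Measure.map_apply_of_aemeasurable hmeas measurableSet_Ici, hdist i]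
    simpa using gaussianReal_Ici_le 0 1 ht0
  calc ℙ {ω | k ≤ #{i | t ≤ X i ω}}
      ≤ (n.choose k : ℝ≥0∞) * ENNReal.ofReal (exp (-t ^ 2 / 2)) ^ k := by
        simpa using hindep.measure_le_card_filter_mem_le measurableSet_Ici htail k
    _ = ENNReal.ofReal ((n.choose k : ℝ) * exp (-t ^ 2 / 2) ^ k) := by
        rw [ENNReal.ofReal_mul (by positivity), ENNReal.ofReal_pow (by positivity),
          ENNReal.ofReal_natCast]
    _ ≤ ENNReal.ofReal (ε ^ k) :=
        ENNReal.ofReal_le_ofReal (choose_mul_exp_neg_sq_pow_le hn hk hε ht)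

lemma sum_range_log_div_succ_le (n : ℕ) : ∑ k ∈ range n, log (n / (k + 1)) ≤ n := by
  rcases n.eq_zero_or_pos with rfl | hn
  · simp
  have hprod : ∏ k ∈ range n, ((n : ℝ) / (k + 1)) = n ^ n / n ! := by
    rw [prod_div_distrib, prod_const, card_range]
    norm_cast
    rw [prod_range_add_one_eq_factorial]
  rw [← log_prod (fun k _ => by positivity), hprod, log_le_iff_le_exp (by positivity)]
  exact Real.pow_div_factorial_le_exp _ (Nat.cast_nonneg n) n

lemma sum_range_sqrt_two_mul_log_le (n : ℕ) :
    ∑ k ∈ range n, √(2 * log (2 * n / (k + 1))) ≤ 3 * n := by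
  have hterm : ∀ k ∈ range n,
      √(2 * log (2 * n / (k + 1))) ≤ log 2 + log (n / (k + 1)) + 1 / 2 := by
    intro k hk
    have hkn : (k : ℝ) + 1 ≤ n := by exact_mod_cast mem_range.1 hk
    have hsplit : log (2 * n / (k + 1)) = log 2 + log (n / (k + 1)) := by
      rw [mul_div_assoc, log_mul two_ne_zero (div_pos (by linarith) (by positivity)).ne']
    have hx : 0 ≤ log (n / (k + 1)) := log_nonneg ((one_le_div (by positivity)).2 hkn)
    rw [hsplit, sqrt_le_left (by positivity)]
    nlinarith [sq_nonneg (log 2 + log (n / (k + 1)) - 1 / 2)]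
  have hlog2 : log 2 ≤ 1 := by linarith [log_le_sub_one_of_pos (x := 2) two_pos]
  calc ∑ k ∈ range n, √(2 * log (2 * n / (k + 1)))
      ≤ ∑ k ∈ range n, (log 2 + 1 / 2 + log (n / (k + 1))) :=
        sum_le_sum fun k hk => (hterm k hk).trans_eq (by ring)
    _ ≤ n * (log 2 + 1 / 2) + n := by
        rw [sum_add_distrib, sum_const, card_range, nsmul_eq_mul]
        linarith [sum_range_log_div_succ_le n]
    _ ≤ 3 * n := by nlinarith [(Nat.cast_nonneg n : (0 : ℝ) ≤ n)]

lemma sum_range_div_two_pow_succ_le {δ : ℝ} (hδ0 : 0 ≤ δ) (hδ1 : δ ≤ 1) (n : ℕ) :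
    ∑ k ∈ range n, (δ / 2) ^ (k + 1) ≤ δ := by
  calc ∑ k ∈ range n, (δ / 2) ^ (k + 1) ≤ ∑ k ∈ range n, δ / 2 * (1 / 2) ^ k := by
        refine sum_le_sum fun k _ => ?_
        rw [pow_succ']
        gcongr
    _ ≤ δ / 2 * 2 := by
        rw [← mul_sum]
        gcongr
        exact sum_geometric_two_le n
    _ = δ := by ring

lemma le_sq_sqrt_add_sqrt_add_sqrt {x y z : ℝ} (hx : 0 ≤ x) (hy : 0 ≤ y) (hz : 0 ≤ z) :
    x + y + z ≤ (√x + √y + √z) ^ 2 := by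
  nlinarith [sq_sqrt hx, sq_sqrt hy, sq_sqrt hz, mul_nonneg (sqrt_nonneg x) (sqrt_nonneg y),
    mul_nonneg (sqrt_nonneg x) (sqrt_nonneg z), mul_nonneg (sqrt_nonneg y) (sqrt_nonneg z)]

lemma one_le_log_exp_one_mul_div {m n : ℕ} (hm : 0 < m) (hmn : m ≤ n) :
    1 ≤ log (exp 1 * n / m) := by
  have hmpos : (0 : ℝ) < m := Nat.cast_pos.2 hm
  have hnpos : (0 : ℝ) < n := Nat.cast_pos.2 (hm.trans_le hmn)
  rw [le_log_iff_exp_le (by positivity), mul_div_assoc, le_mul_iff_one_le_right (exp_pos 1),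
    one_le_div hmpos]
  exact_mod_cast hmn

lemma orderStatDesc_lt_of_card_le {n : ℕ} (v : Fin n → ℝ) {t : ℝ} {j : Fin n}
    (h : #{i | t ≤ v i} ≤ j) : orderStatDesc v j < t := by
  by_contra! hle
  have hsub : (Ici j.rev).image (Tuple.sort v) ⊆ ({i | t ≤ v i} : Finset (Fin n)) := by
    simp only [subset_iff, mem_image, mem_Ici, mem_filter_univ]
    rintro _ ⟨m, hm, rfl⟩
    exact hle.trans (Tuple.monotone_sort v hm)
  have hcard : #((Ici j.rev).image (Tuple.sort v)) = j + 1 := by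
    rw [card_image_of_injective _ (Tuple.sort v).injective, Fin.card_Ici, Fin.val_rev]
    omega
  have := card_le_card hsub
  omega

lemma sum_filter_val_lt {M : Type*} [AddCommMonoid M] {m n : ℕ} (h : m ≤ n) (f : ℕ → M) :
    ∑ i ∈ univ.filter (fun i : Fin n => (i : ℕ) < m), f i = ∑ k ∈ range m, f k := by
  have himage : (univ.filter fun i : Fin n => (i : ℕ) < m).image Fin.val = range m := by
    ext k
    simp only [mem_image, mem_filter_univ, mem_range]
    exact ⟨fun ⟨i, hi, hik⟩ => hik ▸ hi, fun hk => ⟨⟨k, by omega⟩, hk, rfl⟩⟩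
  rw [← himage, sum_image fun _ _ _ _ => Fin.ext]

lemma topAvg_le_of_card_le {NA NP : ℕ} (hNP : NP ≤ NA) (v : Fin NA → ℝ) (t : ℕ → ℝ)
    (h : ∀ k < NP, #{i | t k ≤ v i} ≤ k) :
    topAvg NA NP v ≤ (1 / NP) * ∑ k ∈ range NP, t k := by
  rw [topAvg, ← sum_filter_val_lt hNP]
  refine mul_le_mul_of_nonneg_left (sum_le_sum fun i hi => ?_) (by positivity)
  exact (orderStatDesc_lt_of_card_le v (h i (mem_filter.1 hi).2)).le

/-- The threshold for the `(k+1)`-th largest value (0-indexed, like `orderStatDesc`). -/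
noncomputable def topThreshold (δ : ℝ) (NA NP k : ℕ) : ℝ :=
  √(2 * log (1 / δ)) + √(2 * log (exp 1 * NA / NP)) + √(2 * log (2 * NP / (k + 1)))

section topThreshold

variable {δ : ℝ} {NA NP : ℕ}

lemma topThreshold_nonneg (k : ℕ) : 0 ≤ topThreshold δ NA NP k := by
  unfold topThreshold
  positivity

lemma two_mul_log_le_topThreshold_sq (hδ0 : 0 < δ) (hδ1 : δ ≤ 1) (hNA : NP ≤ NA) {k : ℕ}
    (hk : k < NP) :
    2 * log (exp 1 * NA / ((k + 1 : ℕ) * (δ / 2))) ≤ topThreshold δ NA NP k ^ 2 := by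
  have hNPpos : (0 : ℝ) < NP := Nat.cast_pos.2 (by omega)
  have hNApos : (0 : ℝ) < NA := Nat.cast_pos.2 (by omega)
  have hkNP : (k : ℝ) + 1 ≤ NP := by exact_mod_cast hk
  have hL : 0 ≤ log (1 / δ) := log_nonneg (by rw [le_div_iff₀ hδ0]; linarith)
  have hM : 0 ≤ log (exp 1 * NA / NP) :=
    zero_le_one.trans (one_le_log_exp_one_mul_div (by omega) hNA)
  have hc : 0 ≤ log (2 * NP / (k + 1)) :=
    log_nonneg ((one_le_div (by positivity)).2 (by linarith))
  have hsum : log (1 / δ) + log (exp 1 * NA / NP) + log (2 * NP / (k + 1)) =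
      log (exp 1 * NA / ((k + 1 : ℕ) * (δ / 2))) := by
    rw [← log_mul (by positivity) (by positivity), ← log_mul (by positivity) (by positivity)]
    congr 1
    push_cast
    field_simp
  rw [← hsum, mul_add, mul_add]
  exact le_sq_sqrt_add_sqrt_add_sqrt (by positivity) (by positivity) (by positivity)

lemma one_div_mul_sum_topThreshold_le (hNP : 0 < NP) :
    1 / NP * ∑ k ∈ range NP, topThreshold δ NA NP k ≤
      √(2 * log (1 / δ)) + √(2 * log (exp 1 * NA / NP)) + 3 := by
  have hNPpos : (0 : ℝ) < NP := Nat.cast_pos.2 hNP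
  simp only [topThreshold, sum_add_distrib, sum_const, card_range, nsmul_eq_mul]
  rw [one_div_mul_eq_div, div_le_iff₀ hNPpos]
  linarith [sum_range_sqrt_two_mul_log_le NP]

lemma measure_biUnion_le_card_topThreshold_le {Ω : Type*} [MeasureSpace Ω]
    {X : Fin NA → Ω → ℝ} (hindep : iIndepFun X ℙ)
    (hdist : ∀ i, Measure.map (X i) ℙ = gaussianReal 0 1)
    (hδ0 : 0 < δ) (hδ1 : δ ≤ 1) (hNA : NP ≤ NA) :
    ℙ (⋃ k ∈ range NP, {ω | k + 1 ≤ #{i | topThreshold δ NA NP k ≤ X i ω}}) ≤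
      ENNReal.ofReal δ :=
  calc _ ≤ ∑ k ∈ range NP, ENNReal.ofReal ((δ / 2) ^ (k + 1)) :=
        (measure_biUnion_finset_le _ _).trans <| sum_le_sum fun k hk =>
          measure_le_card_filter_le_le_pow_of_gaussian hindep hdist k.succ_pos (by positivity)
            (topThreshold_nonneg k) (two_mul_log_le_topThreshold_sq hδ0 hδ1 hNA (mem_range.1 hk))
    _ ≤ ENNReal.ofReal δ := by
        rw [← ENNReal.ofReal_sum_of_nonneg fun k _ => by positivity]
        exact ENNReal.ofReal_le_ofReal (sum_range_div_two_pow_succ_le hδ0.le hδ1 NP)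

end topThreshold

theorem stmt4_general {Ω : Type*} [MeasureSpace Ω] [IsProbabilityMeasure (ℙ : Measure Ω)]
    (δ : ℝ) (hδ : δ ∈ Set.Ioo (0 : ℝ) 1)
    (NP NA : ℕ) (hNP : 1 ≤ NP) (hlt : NP < NA)
    (X : Fin NA → Ω → ℝ)
    (hindep : iIndepFun X ℙ)
    (hdist : ∀ i, Measure.map (X i) ℙ = gaussianReal 0 1) :
    ENNReal.ofReal (1 - δ) ≤
      ℙ {ω | topAvg NA NP (fun i => X i ω) ≤ 3 * Real.sqrt (2 * Real.log (1 / δ)) +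
        7 * Real.sqrt (2 * Real.log (Real.exp 1 * NA / NP)) + Real.pi / (2 * NP)} := by
  obtain ⟨hδ0, hδ1⟩ := hδ
  refine ofReal_one_sub_le_measure_of_compl_subset hδ0.le
    (measure_biUnion_le_card_topThreshold_le hindep hdist hδ0 hδ1.le hlt.le) fun ω hω => ?_
  simp only [Set.mem_compl_iff, Set.mem_iUnion, Set.mem_ofPred_eq, not_exists, not_le,
    mem_range] at hω
  have hb : 1 ≤ √(2 * log (exp 1 * NA / NP)) :=
    one_le_sqrt.2 (by linarith [one_le_log_exp_one_mul_div hNP hlt.le])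
  calc topAvg NA NP (fun i => X i ω) ≤ 1 / NP * ∑ k ∈ range NP, topThreshold δ NA NP k :=
        topAvg_le_of_card_le hlt.le _ _ fun k hk => Nat.lt_succ_iff.1 (hω k hk)
    _ ≤ √(2 * log (1 / δ)) + √(2 * log (exp 1 * NA / NP)) + 3 :=
        one_div_mul_sum_topThreshold_le hNP
    _ ≤ _ := by
        have : 0 < π / (2 * NP) := by positivity
        linarith [sqrt_nonneg (2 * log (1 / δ))]

/-- With probability at least `1 - δ`, the average of the `N_P` largest of `N_A` i.i.d.
standard Gaussians is at most `3√(2 log(1/δ)) + 7√(2 log(e N_A/N_P)) + π/(2 N_P)`. -/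
theorem stmt4 {Ω : Type*} [MeasureSpace Ω] [IsProbabilityMeasure (ℙ : Measure Ω)]
    (δ : ℝ) (hδ : δ ∈ Set.Ioo (0 : ℝ) 1)
    (NP NA : ℕ) (hNP : 1 ≤ NP) (hlt : NP < NA)
    (X : Fin NA → Ω → ℝ) (hmeas : ∀ i, Measurable (X i))
    (hindep : iIndepFun X ℙ)
    (hdist : ∀ i, Measure.map (X i) ℙ = gaussianReal 0 1) :
    ENNReal.ofReal (1 - δ) ≤
      ℙ {ω | topAvg NA NP (fun i => X i ω) ≤ 3 * Real.sqrt (2 * Real.log (1 / δ)) +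
        7 * Real.sqrt (2 * Real.log (Real.exp 1 * NA / NP)) + Real.pi / (2 * NP)} :=
  stmt4_general δ hδ NP NA hNP hlt X hindep hdist
end

section
/- Let U_1, …, U_N be independent random variables uniformly distributed on [0,1] and U_{(i)} the i-th smallest among them. Then for every δ ∈ (0,1) and every integer N_P with 1 ≤ N_P ≤ N, P[ there exists i ∈ {1,…,N_P} with U_{(i)} ≤ (i/(e·N))·(δ/N_P)^{1/i} ] ≤ δ. -/
/-!
A union bound over `i`: if the `k`-th smallest of `U_1, …, U_N` is at most `t`, then some `k`
of the `U_j` are at most `t`, and by independence each of the `N.choose k` such events has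
probability at most `t ^ k`. For `t = (k / (e N)) (δ / N_P)^{1/k}` the bounds
`N.choose k ≤ N ^ k / k!` and `k ^ k / k! ≤ e ^ k` give `N.choose k * t ^ k ≤ δ / N_P`,
and summing over the `N_P` indices gives `δ`.
-/

open MeasureTheory ProbabilityTheory
open scoped ENNReal Finset

/-- The `i`-th smallest entry (0-indexed: `i = 0` is the smallest) of the tuple `v`. -/
noncomputable def orderStatAsc {n : ℕ} (v : Fin n → ℝ) (i : Fin n) : ℝ :=
  v (Tuple.sort v i)

lemma choose_mul_div_exp_mul_pow_le_one {N : ℕ} (hN : 0 < N) (k : ℕ) :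
    (N.choose k : ℝ) * (k / (Real.exp 1 * N)) ^ k ≤ 1 := by
  have hN' : (0 : ℝ) < N := by exact_mod_cast hN
  have hfact : (0 : ℝ) < k.factorial := by exact_mod_cast k.factorial_pos
  have hchoose : (N.choose k : ℝ) * k.factorial / N ^ k ≤ 1 := by
    rw [div_le_one (by positivity)]
    exact (le_div_iff₀ hfact).mp (Nat.choose_le_pow_div k N)
  have hexp : (k : ℝ) ^ k / k.factorial / Real.exp 1 ^ k ≤ 1 := by
    rw [div_le_one (by positivity), Real.exp_one_pow]
    exact Real.pow_div_factorial_le_exp _ k.cast_nonneg k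
  calc (N.choose k : ℝ) * (k / (Real.exp 1 * N)) ^ k
      = (N.choose k * k.factorial / N ^ k) * ((k : ℝ) ^ k / k.factorial / Real.exp 1 ^ k) := by
        rw [div_pow, mul_pow]
        field_simp
    _ ≤ 1 * 1 := mul_le_mul hchoose hexp (by positivity) zero_le_one
    _ = 1 := one_mul 1

lemma choose_mul_div_exp_mul_rpow_pow_le {N k : ℕ} (hN : 0 < N) (hk : k ≠ 0) {x : ℝ}
    (hx : 0 ≤ x) :
    (N.choose k : ℝ) * (k / (Real.exp 1 * N) * x ^ (1 / (k : ℝ))) ^ k ≤ x := by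
  rw [mul_pow, one_div, Real.rpow_inv_natCast_pow hx hk, ← mul_assoc]
  exact mul_le_of_le_one_left hx (choose_mul_div_exp_mul_pow_le_one hN k)

lemma exists_card_eq_forall_le_of_orderStatAsc_le {n : ℕ} {v : Fin n → ℝ} {i : Fin n} {t : ℝ}
    (h : orderStatAsc v i ≤ t) :
    ∃ S : Finset (Fin n), S.card = (i : ℕ) + 1 ∧ ∀ j ∈ S, v j ≤ t := by
  refine ⟨(Finset.Iic i).image (Tuple.sort v), ?_, ?_⟩
  · rw [Finset.card_image_of_injective _ (Tuple.sort v).injective, Fin.card_Iic]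
  · simp only [Finset.mem_image, Finset.mem_Iic]
    rintro _ ⟨j, hji, rfl⟩
    exact (Tuple.monotone_sort v hji).trans h

lemma measure_preimage_Iic_le_ofReal {Ω : Type*} [MeasurableSpace Ω] {μ : Measure Ω}
    {X : Ω → ℝ} (hX : μ.map X = volume.restrict (Set.Icc 0 1)) (s : ℝ) :
    μ (X ⁻¹' Set.Iic s) ≤ ENNReal.ofReal s := by
  have hXm : AEMeasurable X μ := AEMeasurable.of_map_ne_zero (by simp [hX])
  rw [← Measure.map_apply_of_aemeasurable hXm measurableSet_Iic, hX,
    Measure.restrict_apply measurableSet_Iic]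
  calc volume (Set.Iic s ∩ Set.Icc 0 1) ≤ volume (Set.Icc 0 s) :=
        measure_mono fun x hx => ⟨hx.2.1, hx.1⟩
    _ = ENNReal.ofReal s := by rw [Real.volume_Icc, sub_zero]

lemma measure_orderStatAsc_le_le {Ω : Type*} [MeasurableSpace Ω] {μ : Measure Ω} {N : ℕ}
    {U : Fin N → Ω → ℝ} (hU : iIndepFun U μ) {t : ℝ} {p : ℝ≥0∞}
    (hp : ∀ j, μ (U j ⁻¹' Set.Iic t) ≤ p) (i : Fin N) :
    μ {ω | orderStatAsc (fun k => U k ω) i ≤ t} ≤ N.choose (i + 1) * p ^ ((i : ℕ) + 1) := by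
  have hsub : {ω | orderStatAsc (fun k => U k ω) i ≤ t} ⊆
      ⋃ S ∈ Finset.powersetCard ((i : ℕ) + 1) Finset.univ, ⋂ j ∈ S, U j ⁻¹' Set.Iic t := by
    intro ω hω
    obtain ⟨S, hcard, hle⟩ := exists_card_eq_forall_le_of_orderStatAsc_le hω
    simp only [Set.mem_iUnion, Set.mem_iInter, Finset.mem_powersetCard]
    exact ⟨S, ⟨Finset.subset_univ S, hcard⟩, hle⟩
  have hinter : ∀ S ∈ Finset.powersetCard ((i : ℕ) + 1) (Finset.univ : Finset (Fin N)),
      μ (⋂ j ∈ S, U j ⁻¹' Set.Iic t) ≤ p ^ ((i : ℕ) + 1) := by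
    intro S hS
    rw [hU.meas_biInter fun j _ => ⟨Set.Iic t, measurableSet_Iic, rfl⟩,
      ← (Finset.mem_powersetCard.mp hS).2]
    exact Finset.prod_le_pow_card _ _ _ fun j _ => hp j
  calc μ {ω | orderStatAsc (fun k => U k ω) i ≤ t}
      ≤ ∑ S ∈ Finset.powersetCard ((i : ℕ) + 1) Finset.univ, μ (⋂ j ∈ S, U j ⁻¹' Set.Iic t) :=
        (measure_mono hsub).trans (measure_biUnion_finset_le _ _)
    _ ≤ ∑ S ∈ Finset.powersetCard ((i : ℕ) + 1) Finset.univ, p ^ ((i : ℕ) + 1) :=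
        Finset.sum_le_sum hinter
    _ = N.choose (i + 1) * p ^ ((i : ℕ) + 1) := by
        rw [Finset.sum_const, Finset.card_powersetCard, Finset.card_univ, Fintype.card_fin,
          nsmul_eq_mul]

lemma measure_orderStatAsc_le_le_of_uniform {Ω : Type*} [MeasurableSpace Ω] {μ : Measure Ω}
    {N : ℕ} {U : Fin N → Ω → ℝ} (hU : iIndepFun U μ)
    (hdist : ∀ j, μ.map (U j) = volume.restrict (Set.Icc 0 1)) {x : ℝ} (hx : 0 ≤ x)
    (i : Fin N) :
    μ {ω | orderStatAsc (fun k => U k ω) i ≤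
        ((i : ℕ) + 1 : ℝ) / (Real.exp 1 * N) * x ^ (1 / ((i : ℕ) + 1 : ℝ))} ≤
      ENNReal.ofReal x := by
  set t := ((i : ℕ) + 1 : ℝ) / (Real.exp 1 * N) * x ^ (1 / ((i : ℕ) + 1 : ℝ))
  have ht : 0 ≤ t := by positivity
  have hchoose := choose_mul_div_exp_mul_rpow_pow_le i.pos (Nat.add_one_ne_zero i) hx
  push_cast at hchoose
  calc μ {ω | orderStatAsc (fun k => U k ω) i ≤ t}
      ≤ N.choose (i + 1) * ENNReal.ofReal t ^ ((i : ℕ) + 1) :=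
        measure_orderStatAsc_le_le hU (fun j => measure_preimage_Iic_le_ofReal (hdist j) t) i
    _ = ENNReal.ofReal (N.choose (i + 1) * t ^ ((i : ℕ) + 1)) := by
        rw [← ENNReal.ofReal_pow ht, ← ENNReal.ofReal_natCast,
          ← ENNReal.ofReal_mul (Nat.cast_nonneg _)]
    _ ≤ ENNReal.ofReal x := ENNReal.ofReal_le_ofReal hchoose

lemma measure_exists_val_lt_le {Ω : Type*} [MeasurableSpace Ω] {μ : Measure Ω} {N m : ℕ}
    {p : Fin N → Ω → Prop} {x : ℝ} (hx : 0 ≤ x)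
    (hp : ∀ i, μ {ω | p i ω} ≤ ENNReal.ofReal (x / m)) :
    μ {ω | ∃ i : Fin N, (i : ℕ) < m ∧ p i ω} ≤ ENNReal.ofReal x := by
  have hcount : (#{i : Fin N | (i : ℕ) < m} : ℝ) * (x / m) ≤ x := by
    rcases m.eq_zero_or_pos with rfl | hm
    · simpa using hx
    calc (#{i : Fin N | (i : ℕ) < m} : ℝ) * (x / m) ≤ m * (x / m) := by
          gcongr; exact_mod_cast Fin.card_filter_val_lt.trans_le (min_le_right N m)
      _ = x := mul_div_cancel₀ x (by positivity)
  calc μ {ω | ∃ i : Fin N, (i : ℕ) < m ∧ p i ω}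
      = μ (⋃ i ∈ ({i : Fin N | (i : ℕ) < m} : Finset (Fin N)), {ω | p i ω}) := by
        congr 1; ext ω; simp
    _ ≤ ∑ i ∈ ({i : Fin N | (i : ℕ) < m} : Finset (Fin N)), ENNReal.ofReal (x / m) :=
        (measure_biUnion_finset_le _ _).trans (Finset.sum_le_sum fun i _ => hp i)
    _ ≤ ENNReal.ofReal x := by
        rw [Finset.sum_const, nsmul_eq_mul, ← ENNReal.ofReal_natCast,
          ← ENNReal.ofReal_mul (Nat.cast_nonneg _)]
        exact ENNReal.ofReal_le_ofReal hcount

theorem stmt10_general {Ω : Type*} [MeasureSpace Ω]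
    (N : ℕ) (U : Fin N → Ω → ℝ)
    (hindep : iIndepFun U ℙ)
    (hdist : ∀ i, Measure.map (U i) ℙ = (volume : Measure ℝ).restrict (Set.Icc 0 1))
    (δ : ℝ) (hδ : δ ∈ Set.Ioo (0 : ℝ) 1) (NP : ℕ) :
    ℙ {ω | ∃ i : Fin N, (i : ℕ) < NP ∧
        orderStatAsc (fun k => U k ω) i ≤
          (((i : ℕ) + 1 : ℝ) / (Real.exp 1 * N)) *
            (δ / NP) ^ (1 / ((i : ℕ) + 1 : ℝ))} ≤ ENNReal.ofReal δ :=
  measure_exists_val_lt_le hδ.1.le fun i =>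
    measure_orderStatAsc_le_le_of_uniform hindep hdist (div_nonneg hδ.1.le NP.cast_nonneg) i

/-- For `N` i.i.d. uniform random variables on `[0,1]`, the probability that some
`i ∈ {1, …, N_P}` satisfies `U_{(i)} ≤ (i/(e N)) (δ/N_P)^{1/i}` is at most `δ`. -/
theorem stmt10 {Ω : Type*} [MeasureSpace Ω] [IsProbabilityMeasure (ℙ : Measure Ω)]
    (N : ℕ) (hN : 1 ≤ N) (U : Fin N → Ω → ℝ) (hmeas : ∀ i, Measurable (U i))
    (hindep : iIndepFun U ℙ)
    (hdist : ∀ i, Measure.map (U i) ℙ = (volume : Measure ℝ).restrict (Set.Icc 0 1))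
    (δ : ℝ) (hδ : δ ∈ Set.Ioo (0 : ℝ) 1) (NP : ℕ) (hNP : 1 ≤ NP) (hle : NP ≤ N) :
    ℙ {ω | ∃ i : Fin N, (i : ℕ) < NP ∧
        orderStatAsc (fun k => U k ω) i ≤
          (((i : ℕ) + 1 : ℝ) / (Real.exp 1 * N)) *
            (δ / NP) ^ (1 / ((i : ℕ) + 1 : ℝ))} ≤ ENNReal.ofReal δ :=
  stmt10_general N U hindep hdist δ hδ NP
end

section
/- Let U_1, …, U_{N_A} be independent random variables uniformly distributed on [0,1], let 1 ≤ N_P ≤ N_A be an integer, and let U_{(N_P)} denote the N_P-th smallest among them. Then for every δ ∈ (0,1), P[ U_{(N_P)} > N_P/(N_A+1) + √( log(1/δ)/(2·N_A) ) ] ≤ δ. -/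
open MeasureTheory ProbabilityTheory Real

lemma bernoulli_mgf_le (p : ℝ) (hp0 : 0 ≤ p) (hp1 : p ≤ 1) (s : ℝ) :
    1 - p + p * exp s ≤ exp (p * s + s ^ 2 / 8) := by
  -- D s := 1 - p + p * exp s > 0
  have hD : ∀ x : ℝ, 0 < 1 - p + p * exp x := by
    intro x
    rcases lt_or_eq_of_le hp1 with h | h
    · nlinarith [exp_pos x, mul_nonneg hp0 (exp_pos x).le]
    · rw [h]; simpa using exp_pos x
  set G : ℝ → ℝ := fun x => p + x / 4 - p * exp x / (1 - p + p * exp x) with hGdef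
  set F : ℝ → ℝ := fun x => p * x + x ^ 2 / 8 - Real.log (1 - p + p * exp x) with hFdef
  have hDexp : ∀ x : ℝ, HasDerivAt (fun y => 1 - p + p * exp y) (p * exp x) x := by
    intro x
    simpa using (((Real.hasDerivAt_exp x).const_mul p).const_add (1 - p))
  have hF' : ∀ x : ℝ, HasDerivAt F (G x) x := by
    intro x
    have h1 : HasDerivAt (fun y : ℝ => p * y + y ^ 2 / 8) (p + 2 * x / 8) x := by
      have ha := (hasDerivAt_id x).const_mul p
      have hb := (hasDerivAt_pow 2 x).div_const 8
      simpa [pow_one] using ha.fun_add hb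
    have h3 : HasDerivAt (fun y => Real.log (1 - p + p * exp y))
        (p * exp x / (1 - p + p * exp x)) x := (hDexp x).log (hD x).ne'
    have := h1.fun_sub h3
    refine this.congr_deriv ?_
    simp only [hGdef]
    ring
  have hG' : ∀ x : ℝ, HasDerivAt G
      (1 / 4 - (p * exp x * (1 - p)) / (1 - p + p * exp x) ^ 2) x := by
    intro x
    have hq : HasDerivAt (fun y => p * exp y / (1 - p + p * exp y))
        ((p * exp x * (1 - p + p * exp x) - p * exp x * (p * exp x)) / (1 - p + p * exp x) ^ 2)
        x := ((Real.hasDerivAt_exp x).const_mul p).div (hDexp x) (hD x).ne'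
    have h1 : HasDerivAt (fun y : ℝ => p + y / 4) (1 / 4) x := by
      simpa using ((hasDerivAt_id x).div_const 4).const_add p
    have := h1.fun_sub hq
    refine this.congr_deriv ?_
    field_simp
    ring
  have hG'nonneg : ∀ x : ℝ, 0 ≤ 1 / 4 - (p * exp x * (1 - p)) / (1 - p + p * exp x) ^ 2 := by
    intro x
    rw [sub_nonneg, div_le_iff₀ (pow_pos (hD x) 2)]
    nlinarith [sq_nonneg (1 - p - p * exp x), hD x]
  have hGmono : Monotone G :=
    monotone_of_deriv_nonneg (fun x => (hG' x).differentiableAt) (fun x => by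
      rw [(hG' x).deriv]; exact hG'nonneg x)
  have hG0 : G 0 = 0 := by simp [hGdef]
  have hF0 : F 0 = 0 := by simp [hFdef]
  have hFnonneg : ∀ x : ℝ, 0 ≤ F x := by
    intro x
    rcases le_total 0 x with hx | hx
    · have hmono : MonotoneOn F (Set.Ici (0 : ℝ)) := by
        refine monotoneOn_of_deriv_nonneg (convex_Ici 0)
          (fun y _ => (hF' y).differentiableAt.continuousAt.continuousWithinAt) (fun y hy => (hF' y).differentiableAt.differentiableWithinAt)
          (fun y hy => ?_)
        rw [(hF' y).deriv]
        have : (0:ℝ) ≤ y := le_of_lt (by simpa using hy)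
        calc (0:ℝ) = G 0 := hG0.symm
        _ ≤ G y := hGmono this
      calc (0:ℝ) = F 0 := hF0.symm
      _ ≤ F x := hmono Set.self_mem_Ici hx hx
    · have hmono : AntitoneOn F (Set.Iic (0 : ℝ)) := by
        refine antitoneOn_of_deriv_nonpos (convex_Iic 0)
          (fun y _ => (hF' y).differentiableAt.continuousAt.continuousWithinAt) (fun y hy => (hF' y).differentiableAt.differentiableWithinAt)
          (fun y hy => ?_)
        rw [(hF' y).deriv]
        have : y ≤ (0:ℝ) := le_of_lt (by simpa using hy)
        calc G y ≤ G 0 := hGmono this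
        _ = 0 := hG0
      calc (0:ℝ) = F 0 := hF0.symm
      _ ≤ F x := hmono hx Set.self_mem_Iic hx
  have hx := hFnonneg s
  have : Real.log (1 - p + p * exp s) ≤ p * s + s ^ 2 / 8 := by
    simp only [hFdef] at hx; linarith
  calc 1 - p + p * exp s = exp (Real.log (1 - p + p * exp s)) := (exp_log (hD s)).symm
  _ ≤ exp (p * s + s ^ 2 / 8) := exp_le_exp.mpr this


lemma card_le_of_sorted_gt {n : ℕ} (v : Fin n → ℝ) (k : Fin n) (t : ℝ)
    (h : t < v (Tuple.sort v k)) :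
    (Finset.univ.filter (fun i => v i ≤ t)).card ≤ (k : ℕ) := by
  classical
  have hiff : (k : ℕ) < Fintype.card {i // (v ∘ Tuple.sort v) i ≤ t} ↔
      (v ∘ Tuple.sort v) k ≤ t := by
    rw [Fintype.card_subtype]
    exact Tuple.lt_card_le_iff_apply_le_of_monotone (Tuple.monotone_sort v)
  have hnot : ¬ ((k : ℕ) < Fintype.card {i // (v ∘ Tuple.sort v) i ≤ t}) := by
    intro hc
    exact absurd (hiff.mp hc) (not_le.mpr h)
  have hcard : Fintype.card {i // (v ∘ Tuple.sort v) i ≤ t}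
      = Fintype.card {i // v i ≤ t} :=
    Fintype.card_congr ((Tuple.sort v).subtypeEquiv (fun i => Iff.rfl))
  have := not_lt.mp hnot
  rwa [hcard, Fintype.card_subtype] at this

set_option maxHeartbeats 2000000 in
/-- For `N_A` i.i.d. uniform random variables on `[0,1]`, the `N_P`-th smallest exceeds
`N_P/(N_A+1) + √(log(1/δ)/(2 N_A))` with probability at most `δ`. -/

theorem stmt11 {Ω : Type*} [MeasureSpace Ω] [IsProbabilityMeasure (ℙ : Measure Ω)]
    (NA NP : ℕ) (hNP : 1 ≤ NP) (hle : NP ≤ NA)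
    (U : Fin NA → Ω → ℝ) (hmeas : ∀ i, Measurable (U i))
    (hindep : iIndepFun U ℙ)
    (hdist : ∀ i, Measure.map (U i) ℙ = (volume : Measure ℝ).restrict (Set.Icc 0 1))
    (δ : ℝ) (hδ : δ ∈ Set.Ioo (0 : ℝ) 1) :
    ℙ {ω | orderStatAsc (fun k => U k ω) ⟨NP - 1, by omega⟩ >
        (NP : ℝ) / (NA + 1) + Real.sqrt (Real.log (1 / δ) / (2 * NA))} ≤
      ENNReal.ofReal δ := by
  classical
  obtain ⟨hδ0, hδ1⟩ := hδ
  have hNA : 0 < NA := lt_of_lt_of_le hNP hle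
  have hNAr : (0:ℝ) < NA := by exact_mod_cast hNA
  have hlog : 0 ≤ Real.log (1 / δ) := by
    apply Real.log_nonneg
    rw [le_div_iff₀ hδ0]; linarith
  obtain ⟨ε, hεdef⟩ : ∃ ε : ℝ, ε = Real.sqrt (Real.log (1 / δ) / (2 * NA)) := ⟨_, rfl⟩
  rw [← hεdef]
  have hε : 0 ≤ ε := hεdef ▸ Real.sqrt_nonneg _
  have hε2 : ε ^ 2 = Real.log (1 / δ) / (2 * NA) := by
    rw [hεdef, Real.sq_sqrt (by positivity)]
  obtain ⟨T, hTdef⟩ : ∃ T : ℝ, T = (NP : ℝ) / (NA + 1) + ε := ⟨_, rfl⟩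
  rw [← hTdef]
  have hNPr : (0:ℝ) < (NP : ℝ) := by exact_mod_cast hNP
  have hT0 : 0 < T := by
    have h2 : (0:ℝ) < (NP:ℝ) / ((NA:ℝ) + 1) := div_pos hNPr (by positivity)
    rw [hTdef]; linarith
  rcases le_or_gt 1 T with hT1 | hT1
  · -- degenerate case: threshold ≥ 1, probability 0
    have hsub : {ω | orderStatAsc (fun k => U k ω) ⟨NP - 1, by omega⟩ > T}
        ⊆ ⋃ j, {ω | 1 < U j ω} := by
      intro ω hω
      simp only [Set.mem_setOf_eq, orderStatAsc] at hω
      exact Set.mem_iUnion.mpr ⟨_, lt_of_le_of_lt hT1 hω⟩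
    refine le_trans (measure_mono hsub) ?_
    refine le_trans (measure_iUnion_le _) ?_
    have hzero : ∀ j : Fin NA, ℙ {ω | 1 < U j ω} = 0 := by
      intro j
      have h1 : {ω | 1 < U j ω} = U j ⁻¹' Set.Ioi 1 := rfl
      rw [h1, ← Measure.map_apply (hmeas j) measurableSet_Ioi, hdist j,
        Measure.restrict_apply measurableSet_Ioi]
      have h2 : Set.Ioi (1:ℝ) ∩ Set.Icc 0 1 = ∅ := by
        ext x
        simp only [Set.mem_inter_iff, Set.mem_Ioi, Set.mem_Icc, Set.mem_empty_iff_false,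
          iff_false, not_and]
        intro hx h0 h1'
        linarith
      rw [h2]; simp
    simp [hzero]
  · -- main case: T < 1
    obtain ⟨g, hgdef⟩ : ∃ g : ℝ → ℝ, g = fun x => if x ≤ T then 1 else 0 := ⟨_, rfl⟩
    have hg : Measurable g := by
      rw [hgdef]; exact Measurable.ite measurableSet_Iic measurable_const measurable_const
    obtain ⟨X, hXdef⟩ : ∃ X : Fin NA → Ω → ℝ, X = fun i => g ∘ U i := ⟨_, rfl⟩
    have hXmeas : ∀ i, Measurable (X i) := fun i => by rw [hXdef]; exact hg.comp (hmeas i)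
    have hXindep : iIndepFun X ℙ := by
      rw [hXdef]; exact hindep.comp (fun _ => g) (fun _ => hg)
    obtain ⟨m, hmdef⟩ : ∃ m : ℝ, m = (NA : ℝ) * T - ((NP : ℝ) - 1) := ⟨_, rfl⟩
    have hNP1 : (NP : ℝ) ≤ (NA : ℝ) + 1 := by
      have : (NP : ℝ) ≤ (NA : ℝ) := by exact_mod_cast hle
      linarith
    have hm : (NA : ℝ) * ε ≤ m := by
      have h1 : (NA : ℝ) * T = (NA : ℝ) * ((NP:ℝ)/((NA:ℝ)+1)) + NA * ε := by rw [hTdef]; ring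
      have h2 : (NA : ℝ) * ((NP:ℝ)/((NA:ℝ)+1)) = (NP : ℝ) - (NP : ℝ)/((NA:ℝ)+1) := by
        field_simp; ring
      have h3 : (NP : ℝ)/((NA:ℝ)+1) ≤ 1 := by
        rw [div_le_one (by positivity)]; exact hNP1
      rw [hmdef, h1, h2]; linarith
    have hm0 : 0 < m := by
      have h3 : (NP : ℝ)/((NA:ℝ)+1) < 1 := by
        rw [div_lt_one (by positivity)]
        have : (NP : ℝ) ≤ (NA : ℝ) := by exact_mod_cast hle
        linarith
      have h1 : (NA : ℝ) * T = (NP : ℝ) - (NP : ℝ)/((NA:ℝ)+1) + NA * ε := by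
        rw [hTdef]; field_simp; ring
      have h4 := mul_nonneg hNAr.le hε
      rw [hmdef, h1]; linarith
    obtain ⟨s, hsdef⟩ : ∃ s : ℝ, s = -4 * m / NA := ⟨_, rfl⟩
    have hs0 : s ≤ 0 := by
      rw [hsdef]
      apply div_nonpos_of_nonpos_of_nonneg <;> nlinarith
    -- integrability of exp (s * X i)
    have hint : ∀ i : Fin NA, Integrable (fun ω => Real.exp (s * X i ω)) ℙ := by
      intro i
      refine Integrable.mono' (integrable_const (Real.exp |s|)) ?_ ?_
      · exact (((hXmeas i).const_mul s).exp).aestronglyMeasurable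
      · refine Filter.Eventually.of_forall (fun ω => ?_)
        rw [Real.norm_eq_abs, abs_of_pos (exp_pos _), Real.exp_le_exp]
        have : X i ω = 0 ∨ X i ω = 1 := by
          simp only [hXdef, hgdef, Function.comp_apply]; split <;> simp
        rcases this with h | h <;> rw [h] <;> simp [abs_nonneg, neg_abs_le, le_abs_self]
    -- mgf of each X i
    have hmgf : ∀ i : Fin NA, mgf (X i) ℙ s = 1 + (Real.exp s - 1) * T := by
      intro i
      have hrw : (fun ω => Real.exp (s * X i ω))
          = fun ω => if U i ω ≤ T then Real.exp s else 1 := by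
        funext ω
        simp only [hXdef, hgdef, Function.comp_apply]
        split <;> simp
      have hmeasg2 : Measurable (fun x : ℝ => if x ≤ T then Real.exp s else 1) :=
        Measurable.ite measurableSet_Iic measurable_const measurable_const
      have hmap := integral_map (μ := ℙ) (φ := U i)
        (hmeas i).aemeasurable hmeasg2.aestronglyMeasurable
      rw [mgf, hrw, ← hmap, hdist i]
      have hrw2 : (fun x : ℝ => if x ≤ T then Real.exp s else 1)
          = fun x => 1 + Set.indicator (Set.Iic T) (fun _ => Real.exp s - 1) x := by
        funext x
        by_cases h : x ≤ T
        · simp [Set.indicator_of_mem, h, Set.mem_Iic]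
        · simp [Set.indicator_of_notMem, h, Set.mem_Iic]
      have hprob : IsProbabilityMeasure ((volume : Measure ℝ).restrict (Set.Icc 0 1)) := by
        constructor
        rw [Measure.restrict_apply_univ, Real.volume_Icc]
        norm_num
      rw [hrw2, integral_add (integrable_const 1)]
      · rw [integral_const, integral_indicator_const _ measurableSet_Iic, measureReal_def, measureReal_def,
          Measure.restrict_apply measurableSet_Iic]
        have h5 : Set.Iic T ∩ Set.Icc 0 1 = Set.Icc 0 T := by
          ext x
          simp only [Set.mem_inter_iff, Set.mem_Iic, Set.mem_Icc]
          constructor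
          · rintro ⟨h1, h2, h3⟩; exact ⟨h2, h1⟩
          · rintro ⟨h1, h2⟩; exact ⟨h2, h1, le_trans h2 hT1.le⟩
        rw [h5, Real.volume_Icc, measure_univ]
        simp only [ENNReal.toReal_one, smul_eq_mul, one_mul]
        rw [ENNReal.toReal_ofReal (by linarith), sub_zero]
        ring
      · exact (integrable_const (Real.exp s - 1)).indicator measurableSet_Iic
    -- event inclusion
    have hsub : {ω | orderStatAsc (fun k => U k ω) ⟨NP - 1, by omega⟩ > T}
        ⊆ {ω | (∑ i, X i) ω ≤ (NP : ℝ) - 1} := by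
      intro ω hω
      simp only [Set.mem_setOf_eq, orderStatAsc] at hω ⊢
      have hcard := card_le_of_sorted_gt (fun k => U k ω) ⟨NP - 1, by omega⟩ T hω
      have hsum : (∑ i, X i) ω = ((Finset.univ.filter (fun i => U i ω ≤ T)).card : ℝ) := by
        simp only [Finset.sum_apply, hXdef, hgdef, Function.comp_apply]
        rw [Finset.sum_boole]
      rw [hsum]
      have h6 : ((Finset.univ.filter (fun i => U i ω ≤ T)).card : ℝ) ≤ ((NP - 1 : ℕ) : ℝ) := by
        exact_mod_cast hcard
      refine le_trans h6 ?_
      have h7 : ((NP - 1 : ℕ) : ℝ) = (NP : ℝ) - 1 := by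
        push_cast [Nat.cast_sub hNP]
        ring
      rw [h7]
    -- Chernoff
    have hintsum : Integrable (fun ω => Real.exp (s * (∑ i, X i) ω)) ℙ :=
      hXindep.integrable_exp_mul_sum hXmeas (fun i _ => hint i)
    have hchern := measure_le_le_exp_mul_mgf (μ := ℙ) (X := ∑ i, X i) ((NP : ℝ) - 1) hs0 hintsum
    rw [hXindep.mgf_sum hXmeas] at hchern
    -- bound the product of mgfs
    have hB0 : 0 ≤ 1 + (Real.exp s - 1) * T := by nlinarith [exp_pos s]
    have hprod : ∏ i : Fin NA, mgf (X i) ℙ s ≤ Real.exp ((NA:ℝ) * (T * s + s ^ 2 / 8)) := by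
      have h1 : ∏ i : Fin NA, mgf (X i) ℙ s = (1 + (Real.exp s - 1) * T) ^ NA := by
        rw [Finset.prod_congr rfl (fun i _ => hmgf i), Finset.prod_const, Finset.card_univ,
          Fintype.card_fin]
      rw [h1]
      have hberq : 1 + (Real.exp s - 1) * T ≤ Real.exp (T * s + s ^ 2 / 8) := by
        have hb := bernoulli_mgf_le T (le_of_lt hT0) hT1.le s
        calc 1 + (Real.exp s - 1) * T = 1 - T + T * Real.exp s := by ring
        _ ≤ Real.exp (T * s + s ^ 2 / 8) := hb
      calc (1 + (Real.exp s - 1) * T) ^ NA ≤ (Real.exp (T * s + s ^ 2 / 8)) ^ NA :=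
            pow_le_pow_left₀ hB0 hberq NA
      _ = Real.exp ((NA:ℝ) * (T * s + s ^ 2 / 8)) := by
            rw [← Real.exp_nat_mul]
    -- final real inequality
    have hfinal : Real.exp (-s * ((NP:ℝ) - 1)) * Real.exp ((NA:ℝ) * (T * s + s ^ 2 / 8)) ≤ δ := by
      rw [← Real.exp_add]
      have hexps : -s * ((NP:ℝ) - 1) + (NA:ℝ) * (T * s + s ^ 2 / 8)
          = s * m + (NA:ℝ) * s ^ 2 / 8 := by
        rw [hmdef]; ring
      rw [hexps]
      have hval : s * m + (NA:ℝ) * s ^ 2 / 8 = -2 * m ^ 2 / NA := by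
        rw [hsdef]; field_simp; ring
      rw [hval]
      have hm2 : (NA:ℝ) ^ 2 * ε ^ 2 ≤ m ^ 2 := by
        nlinarith [mul_nonneg hNAr.le hε]
      have hle2 : -2 * m ^ 2 / NA ≤ Real.log δ := by
        have h4 : Real.log (1/δ) = - Real.log δ := by
          rw [one_div, Real.log_inv]
        have h5 : (NA:ℝ)^2 * ε^2 = (NA:ℝ) * Real.log (1/δ) / 2 := by
          rw [hε2]; field_simp
        rw [div_le_iff₀ hNAr]
        nlinarith [hm2]
      calc Real.exp (-2 * m ^ 2 / NA) ≤ Real.exp (Real.log δ) := Real.exp_le_exp.mpr hle2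
      _ = δ := Real.exp_log hδ0
    -- assemble
    refine le_trans (measure_mono hsub) ?_
    have hne : ℙ {ω | (∑ i, X i) ω ≤ (NP : ℝ) - 1} ≠ ⊤ := measure_ne_top _ _
    rw [← ENNReal.ofReal_toReal hne]
    apply ENNReal.ofReal_le_ofReal
    calc (ℙ {ω | (∑ i, X i) ω ≤ (NP : ℝ) - 1}).toReal
        ≤ Real.exp (-s * ((NP:ℝ) - 1)) * ∏ i : Fin NA, mgf (X i) ℙ s := hchern
      _ ≤ Real.exp (-s * ((NP:ℝ) - 1)) * Real.exp ((NA:ℝ) * (T * s + s ^ 2 / 8)) := by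
          exact mul_le_mul_of_nonneg_left hprod (exp_pos _).le
      _ ≤ δ := hfinal
end

section
/- For all integers 1 ≤ N_P < N_A and every δ ∈ (0,1), the following deterministic inequality holds: (1/N_P)·Σ_{i=1}^{N_P} √( 2·log( (e·N_A/i)·(N_P/δ)^{1/i} ) ) ≤ 3·√(2·log(1/δ)) + 7·√(2·log(e·N_A/N_P)) + π/(2·N_P). -/
/-!
Split the logarithm as `log (e N_A / N_P) + log (N_P / i) + (log N_P + log (1/δ)) / i` and bound
`log (N_P / i) + log N_P / i ≤ 2 N_P / i`. Subadditivity of `√` then bounds the `i`-th summand by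
`√(2 log (e N_A / N_P)) + (2 √N_P + √(2 log (1/δ))) / √i`, and `∑_{i ≤ n} 1/√i ≤ 2 √n` makes the
average at most `√(2 log (e N_A / N_P)) + 4 + 2 √(2 log (1/δ))`; since `N_P ≤ N_A` the constant `4`
is absorbed into `4 √(2 log (e N_A / N_P))`.
-/

open Real Finset

lemma Real.sqrt_add_le_add_sqrt (x y : ℝ) : √(x + y) ≤ √x + √y := by
  rcases le_total 0 x with hx | hx
  · rcases le_total 0 y with hy | hy
    · rw [sqrt_le_left (by positivity)]
      nlinarith [sq_sqrt hx, sq_sqrt hy, sqrt_nonneg x, sqrt_nonneg y]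
    · rw [sqrt_eq_zero_of_nonpos hy, add_zero]
      exact sqrt_le_sqrt (by linarith)
  · rw [sqrt_eq_zero_of_nonpos hx, zero_add]
    exact sqrt_le_sqrt (by linarith)

lemma sum_Icc_inv_sqrt_le (n : ℕ) : ∑ i ∈ Icc 1 n, 1 / √i ≤ 2 * √n := by
  induction n with
  | zero => simp
  | succ n ih =>
    rw [sum_Icc_succ_top (by omega)]
    have hpos : 0 < √(n + 1 : ℕ) := sqrt_pos.2 (by positivity)
    -- `2 (√(n+1) - √n) = 2 / (√(n+1) + √n)`
    have hstep : 1 / √(n + 1 : ℕ) ≤ 2 * √(n + 1 : ℕ) - 2 * √n := by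
      rw [div_le_iff₀ hpos]
      have hsq : √(n + 1 : ℕ) ^ 2 = √n ^ 2 + 1 := by
        rw [sq_sqrt (by positivity), sq_sqrt (by positivity)]; push_cast; ring
      nlinarith [sq_nonneg (√(n + 1 : ℕ) - √n)]
    linarith

lemma sum_Icc_add_div_sqrt_le (n : ℕ) (A : ℝ) {c : ℝ} (hc : 0 ≤ c) :
    ∑ i ∈ Icc 1 n, (A + c / √i) ≤ n * A + 2 * c * √n := by
  calc ∑ i ∈ Icc 1 n, (A + c / √i) = n * A + c * ∑ i ∈ Icc 1 n, 1 / √i := by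
        simp only [sum_add_distrib, sum_const, Nat.card_Icc, add_tsub_cancel_right, nsmul_eq_mul,
          mul_sum, mul_one_div]
    _ ≤ n * A + c * (2 * √n) := by gcongr; exact sum_Icc_inv_sqrt_le n
    _ = n * A + 2 * c * √n := by ring

section

variable {a n x δ : ℝ} (ha : 0 < a) (hn : 0 < n) (hx : 0 < x) (hδ : 0 < δ)
include ha hn hx hδ

lemma log_mul_rpow_inv_eq :
    log ((exp 1 * a / x) * (n / δ) ^ (1 / x)) =
      log (exp 1 * a / n) + log (n / x) + (log n + log (1 / δ)) / x := by
  rw [log_mul (by positivity) (by positivity), log_rpow (by positivity),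
    log_div (by positivity) hx.ne', log_div (by positivity) hn.ne', log_div hn.ne' hx.ne',
    log_div hn.ne' hδ.ne', one_div δ, log_inv]
  ring

lemma log_mul_rpow_inv_le :
    log ((exp 1 * a / x) * (n / δ) ^ (1 / x)) ≤ log (exp 1 * a / n) + (2 * n + log (1 / δ)) / x := by
  have hratio : log (n / x) ≤ n / x := (log_le_sub_one_of_pos (by positivity)).trans (by linarith)
  have hlog : log n ≤ n := (log_le_sub_one_of_pos hn).trans (by linarith)
  have hsplit : (2 * n + log (1 / δ)) / x = n / x + (n + log (1 / δ)) / x := by ring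
  have : (log n + log (1 / δ)) / x ≤ (n + log (1 / δ)) / x := by gcongr
  rw [log_mul_rpow_inv_eq ha hn hx hδ]
  linarith

lemma sqrt_two_mul_log_mul_rpow_inv_le :
    √(2 * log ((exp 1 * a / x) * (n / δ) ^ (1 / x))) ≤
      √(2 * log (exp 1 * a / n)) + (2 * √n + √(2 * log (1 / δ))) / √x := by
  calc √(2 * log ((exp 1 * a / x) * (n / δ) ^ (1 / x)))
      ≤ √(2 * log (exp 1 * a / n) + 2 ^ 2 * n / x + 2 * log (1 / δ) / x) := by
        gcongr
        exact (mul_le_mul_of_nonneg_left (log_mul_rpow_inv_le ha hn hx hδ) two_pos.le).trans_eq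
          (by ring)
    _ ≤ √(2 * log (exp 1 * a / n)) + √(2 ^ 2 * n / x) + √(2 * log (1 / δ) / x) :=
        (sqrt_add_le_add_sqrt _ _).trans (by gcongr; exact sqrt_add_le_add_sqrt _ _)
    _ = √(2 * log (exp 1 * a / n)) + (2 * √n + √(2 * log (1 / δ))) / √x := by
        rw [sqrt_div' _ hx.le, sqrt_div' _ hx.le, sqrt_mul (by norm_num : (0 : ℝ) ≤ 2 ^ 2) n,
          sqrt_sq (by norm_num),
          add_div, add_assoc]

end

lemma one_le_log_exp_mul_div {a n : ℝ} (hn : 0 < n) (hna : n ≤ a) : 1 ≤ log (exp 1 * a / n) := by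
  rw [le_log_iff_exp_le (div_pos (mul_pos (exp_pos 1) (hn.trans_le hna)) hn), le_div_iff₀ hn]
  gcongr

/-- Deterministic bound: for `1 ≤ N_P < N_A` and `δ ∈ (0,1)`,
`(1/N_P) ∑_{i=1}^{N_P} √(2 log((e N_A/i) (N_P/δ)^{1/i}))
  ≤ 3√(2 log(1/δ)) + 7√(2 log(e N_A/N_P)) + π/(2 N_P)`. -/
theorem stmt14 (NP NA : ℕ) (hNP : 1 ≤ NP) (hlt : NP < NA)
    (δ : ℝ) (hδ : δ ∈ Set.Ioo (0 : ℝ) 1) :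
    (1 / (NP : ℝ)) * ∑ i ∈ Finset.Icc 1 NP,
        Real.sqrt (2 * Real.log ((Real.exp 1 * NA / (i : ℝ)) *
          ((NP : ℝ) / δ) ^ (1 / (i : ℝ)))) ≤
      3 * Real.sqrt (2 * Real.log (1 / δ)) +
        7 * Real.sqrt (2 * Real.log (Real.exp 1 * NA / NP)) + Real.pi / (2 * NP) := by
  have hNP0 : (0 : ℝ) < NP := by exact_mod_cast hNP
  set L := √(2 * log (exp 1 * NA / NP))
  set D := √(2 * log (1 / δ))
  have hsum : ∑ i ∈ Icc 1 NP, √(2 * log ((exp 1 * NA / (i : ℝ)) * ((NP : ℝ) / δ) ^ (1 / (i : ℝ))))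
      ≤ NP * L + 2 * (2 * √NP + D) * √NP := by
    refine (sum_le_sum fun i hi ↦ ?_).trans (sum_Icc_add_div_sqrt_le NP L (by positivity))
    have hi : (0 : ℝ) < i := by exact_mod_cast (mem_Icc.1 hi).1
    exact sqrt_two_mul_log_mul_rpow_inv_le (hNP0.trans (by exact_mod_cast hlt)) hNP0 hi hδ.1
  have hL : 1 ≤ L :=
    one_le_sqrt.2 (by linarith [one_le_log_exp_mul_div hNP0 (Nat.cast_le.2 hlt.le : (NP : ℝ) ≤ NA)])
  have hsqrt : √NP * √NP = NP := mul_self_sqrt hNP0.le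
  have hsqrt_le : √NP ≤ NP := by nlinarith [one_le_sqrt.2 (by exact_mod_cast hNP : (1 : ℝ) ≤ NP)]
  have hD : 0 ≤ D := sqrt_nonneg _
  rw [one_div_mul_eq_div, div_le_iff₀ hNP0]
  calc _ ≤ NP * L + 4 * NP + 2 * D * √NP := hsum.trans_eq (by linear_combination 4 * hsqrt)
    _ ≤ (3 * D + 7 * L + π / (2 * NP)) * NP := by
      have hpi : π / (2 * NP) * NP = π / 2 := by field_simp
      nlinarith [pi_pos]
end
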